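/- Let F : {0,1}^A → {0,1} be Boolean with Fourier expansion F = Σ_{T⊆A} F̂(T) w_T, and suppose Σ_{T : 0<|T|<(log n)/50} F̂(T)² ≥ c₀ > 0 and Σ_j I_j(F) ≤ 10^{-3} log n · ‖F‖₂². Then using the hypercontractive bound Σ_j I_j(F) ≳ Σ_j (Σ_{T∋j} F̂(T)² 2^{-|T|})^{3/4}, some coordinate j ∈ A satisfies I_j(F) ≳ n^{-1/12} for large n (with implicit constants depending on c₀). -/

import Mathlib

set_option linter.unusedSectionVars false
set_option maxHeartbeats 1000000

open Finset
open scoped Classical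

/-- Expectation (= `‖F‖₂²` for Boolean `F`) under the uniform measure. -/
noncomputable def Ef (n : ℕ) (f : (Fin n → Bool) → Bool) : ℝ :=
  ((Finset.univ.filter (fun x : Fin n → Bool => f x = true)).card : ℝ) / 2 ^ n

/-- Influence of coordinate `j`: `I_j(F) = ‖F|_{x_j=1} - F|_{x_j=0}‖₁`. -/
noncomputable def coordInf (n : ℕ) (j : Fin n) (f : (Fin n → Bool) → Bool) : ℝ :=
  ((Finset.univ.filter (fun x : Fin n → Bool =>
      f (Function.update x j false) ≠ f (Function.update x j true))).card : ℝ) / 2 ^ n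

/-- Fourier–Walsh coefficient `F̂(T)`. -/
noncomputable def fhat (n : ℕ) (f : (Fin n → Bool) → Bool) (T : Finset (Fin n)) : ℝ :=
  (∑ x : Fin n → Bool,
      (if f x = true then (1 : ℝ) else 0) *
        (-1 : ℝ) ^ ((T.filter (fun i => x i = true)).card)) / 2 ^ n


namespace CaseII
variable {ι : Type*} [Fintype ι] [DecidableEq ι]

noncomputable def eps (b : Bool) : ℝ := if b = true then -1 else 1

noncomputable def chi (T : Finset ι) (x : ι → Bool) : ℝ := ∏ i ∈ T, eps (x i)

lemma eps_sq (b : Bool) : eps b ^ 2 = 1 := by cases b <;> simp [eps]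

lemma chi_empty (x : ι → Bool) : chi (∅ : Finset ι) x = 1 := by simp [chi]

lemma chi_insert {j : ι} {T : Finset ι} (hj : j ∉ T) (x : ι → Bool) :
    chi (insert j T) x = eps (x j) * chi T x := by
  simp [chi, Finset.prod_insert hj]

lemma chi_eq_pow (T : Finset ι) (x : ι → Bool) :
    chi T x = (-1 : ℝ) ^ ((T.filter (fun i => x i = true)).card) := by
  rw [chi]
  rw [show (fun i => eps (x i)) = fun i => if x i = true then (-1:ℝ) else 1 from rfl]
  rw [Finset.prod_ite]
  simp

def flip (j : ι) (x : ι → Bool) : ι → Bool := Function.update x j (!(x j))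

lemma flip_apply_self (j : ι) (x : ι → Bool) : flip j x j = !(x j) := by
  simp [flip]

lemma flip_apply_ne {i j : ι} (h : i ≠ j) (x : ι → Bool) : flip j x i = x i := by
  simp [flip, Function.update_apply, h]

lemma flip_involutive (j : ι) : Function.Involutive (flip j) := by
  intro x; funext i
  by_cases h : i = j
  · subst h; simp [flip]
  · simp [flip_apply_ne h]

lemma sum_flip (j : ι) (H : (ι → Bool) → ℝ) :
    ∑ x : ι → Bool, H (flip j x) = ∑ x : ι → Bool, H x :=
  Equiv.sum_comp ((flip_involutive j).toPerm _) H

lemma chi_flip {j : ι} {T : Finset ι} (hj : j ∉ T) (x : ι → Bool) :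
    chi T (flip j x) = chi T x := by
  unfold chi
  refine Finset.prod_congr rfl fun i hi => ?_
  exact congrArg eps (flip_apply_ne (by rintro rfl; exact hj hi) x)

lemma eps_flip (j : ι) (x : ι → Bool) : eps (flip j x j) = - eps (x j) := by
  rw [flip_apply_self]; cases x j <;> simp [eps]

lemma chi_flip_mem {j : ι} {T : Finset ι} (hj : j ∈ T) (x : ι → Bool) :
    chi T (flip j x) = - chi T x := by
  rw [chi, chi, ← Finset.mul_prod_erase _ _ hj, ← Finset.mul_prod_erase _ (fun i => eps (x i)) hj]
  rw [eps_flip]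
  rw [show ∏ i ∈ T.erase j, eps (flip j x i) = ∏ i ∈ T.erase j, eps (x i) from
    Finset.prod_congr rfl fun i hi => by rw [flip_apply_ne (Finset.ne_of_mem_erase hi) x]]
  ring

/-- Cauchy–Schwarz corollary: `∑ u²v² ≤ √(∑u⁴)√(∑v⁴)`-style, in product form. -/
lemma sum_sq_mul_sq_le {u v : (ι → Bool) → ℝ} {B C : ℝ} (hB : 0 ≤ B) (hC : 0 ≤ C)
    (hu : ∑ x : ι → Bool, u x ^ 4 ≤ B) (hv : ∑ x : ι → Bool, v x ^ 4 ≤ C) :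
    ∑ x : ι → Bool, u x ^ 2 * v x ^ 2 ≤ Real.sqrt B * Real.sqrt C := by
  have h1 : (∑ x : ι → Bool, u x ^ 2 * v x ^ 2) ^ 2 ≤ B * C := by
    calc (∑ x : ι → Bool, u x ^ 2 * v x ^ 2) ^ 2
        ≤ (∑ x : ι → Bool, (u x ^ 2) ^ 2) * ∑ x : ι → Bool, (v x ^ 2) ^ 2 :=
          Finset.sum_mul_sq_le_sq_mul_sq _ _ _
      _ ≤ B * C := by
          refine mul_le_mul ?_ ?_ (Finset.sum_nonneg fun x _ => sq_nonneg _) hB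
          · simpa [← pow_mul] using hu
          · simpa [← pow_mul] using hv
  have h0 : 0 ≤ ∑ x : ι → Bool, u x ^ 2 * v x ^ 2 :=
    Finset.sum_nonneg fun x _ => mul_nonneg (sq_nonneg _) (sq_nonneg _)
  calc ∑ x : ι → Bool, u x ^ 2 * v x ^ 2
      = Real.sqrt ((∑ x : ι → Bool, u x ^ 2 * v x ^ 2) ^ 2) := (Real.sqrt_sq h0).symm
    _ ≤ Real.sqrt (B * C) := Real.sqrt_le_sqrt h1
    _ = Real.sqrt B * Real.sqrt C := Real.sqrt_mul hB C

/-- (2,4)-hypercontractivity on the discrete cube, unnormalized form. -/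
lemma hyp24 (s : Finset ι) : ∀ (a : Finset ι → ℝ) (ρ : ℝ), 0 ≤ ρ → 3 * ρ ^ 2 ≤ 1 →
    ∑ x : ι → Bool, (∑ T ∈ s.powerset, ρ ^ T.card * a T * chi T x) ^ 4
      ≤ 2 ^ (Fintype.card ι) * (∑ T ∈ s.powerset, a T ^ 2) ^ 2 := by
  induction s using Finset.induction_on with
  | empty =>
    intro a ρ hρ h3
    simp only [Finset.powerset_empty, Finset.sum_singleton, Finset.card_empty, pow_zero,
      chi, Finset.prod_empty, one_mul, mul_one]
    rw [Finset.sum_const]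
    simp only [Finset.card_univ, Fintype.card_fun, Fintype.card_bool, nsmul_eq_mul]
    push_cast
    have h : (a ∅) ^ 4 = ((a ∅) ^ 2) ^ 2 := by ring
    rw [h]
  | @insert j s hjs IH =>
    intro a ρ hρ h3
    set u : (ι → Bool) → ℝ := fun x => ∑ T ∈ s.powerset, ρ ^ T.card * a T * chi T x with hu
    set v : (ι → Bool) → ℝ := fun x => ∑ T ∈ s.powerset, ρ ^ T.card * a (insert j T) * chi T x
      with hv
    have hjP : ∀ T ∈ s.powerset, j ∉ T := fun T hT =>
      fun hj => hjs (Finset.mem_powerset.1 hT hj)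
    have hinj : Set.InjOn (insert j) (s.powerset : Set (Finset ι)) := by
      intro T hT T' hT' h
      have hjT := hjP T (by simpa using hT)
      have hjT' := hjP T' (by simpa using hT')
      rw [← Finset.erase_insert hjT, ← Finset.erase_insert hjT', h]
    have hdisj : Disjoint s.powerset (s.powerset.image (insert j)) := by
      rw [Finset.disjoint_left]
      intro T hT hT2
      obtain ⟨T', hT', rfl⟩ := Finset.mem_image.1 hT2
      exact hjP _ hT (Finset.mem_insert_self _ _)
    -- decomposition of the big sum
    have hdec : ∀ x : ι → Bool,
        (∑ T ∈ (insert j s).powerset, ρ ^ T.card * a T * chi T x)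
          = u x + eps (x j) * (ρ * v x) := by
      intro x
      rw [Finset.powerset_insert, Finset.sum_union hdisj, Finset.sum_image (fun T hT T' hT' h => hinj hT hT' h)]
      congr 1
      rw [Finset.mul_sum, Finset.mul_sum]
      refine Finset.sum_congr rfl fun T hT => ?_
      have hjT := hjP T hT
      rw [Finset.card_insert_of_notMem hjT, chi_insert hjT]
      ring
    have hu_flip : ∀ x, u (flip j x) = u x := fun x =>
      Finset.sum_congr rfl fun T hT => by rw [chi_flip (hjP T hT)]
    have hv_flip : ∀ x, v (flip j x) = v x := fun x =>
      Finset.sum_congr rfl fun T hT => by rw [chi_flip (hjP T hT)]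
    have key : ∀ x : ι → Bool,
        (u x + eps (x j) * (ρ * v x)) ^ 4
          + (u (flip j x) + eps (flip j x j) * (ρ * v (flip j x))) ^ 4
          = 2 * u x ^ 4 + 12 * ρ ^ 2 * (u x ^ 2 * v x ^ 2) + 2 * ρ ^ 4 * v x ^ 4 := by
      intro x
      rw [hu_flip, hv_flip, eps_flip]
      cases hb : x j <;> simp [eps] <;> ring
    have hsum2 : 2 * ∑ x : ι → Bool, (u x + eps (x j) * (ρ * v x)) ^ 4
        = 2 * ((∑ x : ι → Bool, u x ^ 4)
            + 6 * ρ ^ 2 * (∑ x : ι → Bool, u x ^ 2 * v x ^ 2)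
            + ρ ^ 4 * (∑ x : ι → Bool, v x ^ 4)) := by
      have hre := sum_flip j (fun x => (u x + eps (x j) * (ρ * v x)) ^ 4)
      calc 2 * ∑ x : ι → Bool, (u x + eps (x j) * (ρ * v x)) ^ 4
          = (∑ x : ι → Bool, (u x + eps (x j) * (ρ * v x)) ^ 4)
            + ∑ x : ι → Bool, (u (flip j x) + eps (flip j x j) * (ρ * v (flip j x))) ^ 4 := by
            rw [hre]; ring
        _ = ∑ x : ι → Bool, ((u x + eps (x j) * (ρ * v x)) ^ 4
            + (u (flip j x) + eps (flip j x j) * (ρ * v (flip j x))) ^ 4) :=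
            Finset.sum_add_distrib.symm
        _ = ∑ x : ι → Bool, (2 * u x ^ 4 + 12 * ρ ^ 2 * (u x ^ 2 * v x ^ 2)
            + 2 * ρ ^ 4 * v x ^ 4) := Finset.sum_congr rfl fun x _ => key x
        _ = 2 * ((∑ x : ι → Bool, u x ^ 4)
            + 6 * ρ ^ 2 * (∑ x : ι → Bool, u x ^ 2 * v x ^ 2)
            + ρ ^ 4 * (∑ x : ι → Bool, v x ^ 4)) := by
            rw [Finset.sum_add_distrib, Finset.sum_add_distrib, ← Finset.mul_sum,
              ← Finset.mul_sum, ← Finset.mul_sum]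
            ring
    have hfin : ∑ x : ι → Bool, (u x + eps (x j) * (ρ * v x)) ^ 4
        = (∑ x : ι → Bool, u x ^ 4)
          + 6 * ρ ^ 2 * (∑ x : ι → Bool, u x ^ 2 * v x ^ 2)
          + ρ ^ 4 * (∑ x : ι → Bool, v x ^ 4) :=
      mul_left_cancel₀ two_ne_zero hsum2
    set B : ℝ := ∑ T ∈ s.powerset, a T ^ 2 with hB
    set C : ℝ := ∑ T ∈ s.powerset, a (insert j T) ^ 2 with hC
    have hB0 : 0 ≤ B := Finset.sum_nonneg fun T _ => sq_nonneg _
    have hC0 : 0 ≤ C := Finset.sum_nonneg fun T _ => sq_nonneg _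
    have hN0 : (0:ℝ) < 2 ^ Fintype.card ι := by positivity
    have hu4 : ∑ x : ι → Bool, u x ^ 4 ≤ 2 ^ Fintype.card ι * B ^ 2 := IH a ρ hρ h3
    have hv4 : ∑ x : ι → Bool, v x ^ 4 ≤ 2 ^ Fintype.card ι * C ^ 2 :=
      IH (fun T => a (insert j T)) ρ hρ h3
    have hcross : ∑ x : ι → Bool, u x ^ 2 * v x ^ 2 ≤ 2 ^ Fintype.card ι * (B * C) := by
      have h := sum_sq_mul_sq_le (by positivity) (by positivity) hu4 hv4
      have hss : Real.sqrt ((2:ℝ) ^ Fintype.card ι) * Real.sqrt ((2:ℝ) ^ Fintype.card ι)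
          = 2 ^ Fintype.card ι := Real.mul_self_sqrt (le_of_lt hN0)
      calc ∑ x : ι → Bool, u x ^ 2 * v x ^ 2
          ≤ Real.sqrt (2 ^ Fintype.card ι * B ^ 2) * Real.sqrt (2 ^ Fintype.card ι * C ^ 2) := h
        _ = (Real.sqrt ((2:ℝ) ^ Fintype.card ι) * Real.sqrt ((2:ℝ) ^ Fintype.card ι))
              * (Real.sqrt (B ^ 2) * Real.sqrt (C ^ 2)) := by
            rw [Real.sqrt_mul (le_of_lt hN0), Real.sqrt_mul (le_of_lt hN0)]; ring
        _ = 2 ^ Fintype.card ι * (B * C) := by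
            rw [hss, Real.sqrt_sq hB0, Real.sqrt_sq hC0]
    have hBC : ∑ T ∈ (insert j s).powerset, a T ^ 2 = B + C := by
      rw [Finset.powerset_insert, Finset.sum_union hdisj,
        Finset.sum_image (fun T hT T' hT' h => hinj hT hT' h)]
    have hρ2 : ρ ^ 2 ≤ 1/3 := by linarith
    have hρ4 : ρ ^ 4 ≤ 1 := by nlinarith [sq_nonneg ρ]
    have hρ2' : (0:ℝ) ≤ ρ ^ 2 := sq_nonneg ρ
    have hρ4' : (0:ℝ) ≤ ρ ^ 4 := by positivity
    calc ∑ x : ι → Bool, (∑ T ∈ (insert j s).powerset, ρ ^ T.card * a T * chi T x) ^ 4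
        = ∑ x : ι → Bool, (u x + eps (x j) * (ρ * v x)) ^ 4 :=
          Finset.sum_congr rfl fun x _ => by rw [hdec x]
      _ = (∑ x : ι → Bool, u x ^ 4)
          + 6 * ρ ^ 2 * (∑ x : ι → Bool, u x ^ 2 * v x ^ 2)
          + ρ ^ 4 * (∑ x : ι → Bool, v x ^ 4) := hfin
      _ ≤ 2 ^ Fintype.card ι * B ^ 2
          + 6 * ρ ^ 2 * (2 ^ Fintype.card ι * (B * C))
          + ρ ^ 4 * (2 ^ Fintype.card ι * C ^ 2) := by
          have h2 : 6 * ρ ^ 2 * (∑ x : ι → Bool, u x ^ 2 * v x ^ 2)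
              ≤ 6 * ρ ^ 2 * (2 ^ Fintype.card ι * (B * C)) :=
            mul_le_mul_of_nonneg_left hcross (by positivity)
          have h3' : ρ ^ 4 * (∑ x : ι → Bool, v x ^ 4)
              ≤ ρ ^ 4 * (2 ^ Fintype.card ι * C ^ 2) :=
            mul_le_mul_of_nonneg_left hv4 hρ4'
          linarith [hu4]
      _ ≤ 2 ^ Fintype.card ι * (B + C) ^ 2 := by
          have hin : B ^ 2 + 6 * ρ ^ 2 * (B * C) + ρ ^ 4 * C ^ 2 ≤ (B + C) ^ 2 := by
            nlinarith [mul_nonneg hB0 hC0, sq_nonneg C, hρ2, hρ4, sq_nonneg B,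
              mul_le_mul_of_nonneg_right hρ2 (mul_nonneg hB0 hC0),
              mul_le_mul_of_nonneg_right hρ4 (sq_nonneg C)]
          calc 2 ^ Fintype.card ι * B ^ 2 + 6 * ρ ^ 2 * (2 ^ Fintype.card ι * (B * C))
              + ρ ^ 4 * (2 ^ Fintype.card ι * C ^ 2)
              = 2 ^ Fintype.card ι * (B ^ 2 + 6 * ρ ^ 2 * (B * C) + ρ ^ 4 * C ^ 2) := by ring
            _ ≤ 2 ^ Fintype.card ι * (B + C) ^ 2 :=
              mul_le_mul_of_nonneg_left hin (le_of_lt hN0)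
      _ = 2 ^ Fintype.card ι * (∑ T ∈ (insert j s).powerset, a T ^ 2) ^ 2 := by rw [hBC]


section Main
variable {n : ℕ} (F : (Fin n → Bool) → Bool)

/-- `ind F x = 1` if `F x` else `0`. -/
noncomputable def ind (x : Fin n → Bool) : ℝ := if F x = true then 1 else 0

/-- Unnormalized Fourier coefficient. -/
noncomputable def Fh (T : Finset (Fin n)) : ℝ := ∑ x : Fin n → Bool, ind F x * chi T x

lemma fhat_eq (T : Finset (Fin n)) : fhat n F T = Fh F T / 2 ^ n := by
  unfold fhat Fh
  congr 1
  exact Finset.sum_congr rfl fun x _ => by rw [chi_eq_pow]; rfl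

/-- The discrete derivative in direction `j`. -/
noncomputable def gee (j : Fin n) (x : Fin n → Bool) : ℝ :=
  ind F (Function.update x j true) - ind F (Function.update x j false)

lemma gee_eq (j : Fin n) (x : Fin n → Bool) :
    gee F j x = - eps (x j) * (ind F x - ind F (flip j x)) := by
  unfold gee flip
  cases hb : x j
  · have h1 : Function.update x j false = x := by rw [← hb]; exact Function.update_eq_self j x
    rw [h1]
    simp [eps]
  · have h1 : Function.update x j true = x := by rw [← hb]; exact Function.update_eq_self j x
    rw [h1]
    simp [eps]

lemma G_eq {j : Fin n} {S : Finset (Fin n)} (hj : j ∉ S) :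
    ∑ x : Fin n → Bool, gee F j x * chi S x = -2 * Fh F (insert j S) := by
  have step1 : ∑ x : Fin n → Bool, gee F j x * chi S x
      = (∑ x : Fin n → Bool, - (eps (x j) * ind F x * chi S x))
        + ∑ x : Fin n → Bool, eps (x j) * ind F (flip j x) * chi S x := by
    rw [← Finset.sum_add_distrib]
    refine Finset.sum_congr rfl fun x _ => by rw [gee_eq]; ring
  have step2 : ∑ x : Fin n → Bool, eps (x j) * ind F (flip j x) * chi S x
      = ∑ x : Fin n → Bool, - (eps (x j) * ind F x * chi S x) := by
    rw [← sum_flip j (fun x => eps (x j) * ind F (flip j x) * chi S x)]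
    refine Finset.sum_congr rfl fun x _ => ?_
    rw [eps_flip, flip_involutive j x, chi_flip hj]
    ring
  rw [step1, step2, ← Finset.sum_add_distrib]
  unfold Fh
  rw [Finset.mul_sum]
  refine Finset.sum_congr rfl fun x _ => ?_
  rw [chi_insert hj]
  ring

lemma Fh_outside {A : Finset (Fin n)}
    (hF : ∀ x y : Fin n → Bool, (∀ i ∈ A, x i = y i) → F x = F y)
    {T : Finset (Fin n)} {i : Fin n} (hiT : i ∈ T) (hiA : i ∉ A) : Fh F T = 0 := by
  have h := sum_flip i (fun x => ind F x * chi T x)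
  have h2 : ∀ x : Fin n → Bool, ind F (flip i x) * chi T (flip i x)
      = - (ind F x * chi T x) := by
    intro x
    have hFx : F (flip i x) = F x := by
      exact hF _ _ fun l hl => flip_apply_ne (by rintro rfl; exact hiA hl) x
    rw [chi_flip_mem hiT]
    unfold ind
    rw [hFx]
    ring
  rw [Finset.sum_congr rfl fun x _ => h2 x] at h
  rw [Finset.sum_neg_distrib] at h
  unfold Fh
  linarith

lemma gee_sq (j : Fin n) (x : Fin n → Bool) :
    gee F j x ^ 2 = if F (Function.update x j false) ≠ F (Function.update x j true)
      then (1:ℝ) else 0 := by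
  unfold gee ind
  by_cases h1 : F (Function.update x j true) = true <;>
    by_cases h0 : F (Function.update x j false) = true <;>
      simp [h1, h0, Bool.not_eq_true] at * <;> simp [h0, h1]

lemma gee_vals (j : Fin n) (x : Fin n → Bool) :
    gee F j x = -1 ∨ gee F j x = 0 ∨ gee F j x = 1 := by
  unfold gee ind
  by_cases h1 : F (Function.update x j true) = true <;>
    by_cases h0 : F (Function.update x j false) = true <;> simp [h1, h0]

lemma gee_abs (j : Fin n) (x : Fin n → Bool) : |gee F j x| = gee F j x ^ 2 := by
  rcases gee_vals F j x with h | h | h <;> rw [h] <;> norm_num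

lemma gee_pow4 (j : Fin n) (x : Fin n → Bool) : gee F j x ^ 4 = gee F j x ^ 2 := by
  rcases gee_vals F j x with h | h | h <;> rw [h] <;> norm_num

lemma sum_gee_sq (j : Fin n) :
    ∑ x : Fin n → Bool, gee F j x ^ 2 = 2 ^ n * coordInf n j F := by
  rw [Finset.sum_congr rfl fun x _ => gee_sq F j x]
  rw [Finset.sum_boole]
  unfold coordInf
  have h2 : ((2:ℝ) ^ n) ≠ 0 := by positivity
  field_simp

lemma coordInf_nonneg (j : Fin n) : 0 ≤ coordInf n j F := by
  unfold coordInf; positivity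

/-- The key hypercontractive estimate for a single coordinate. -/
lemma Qj_sq_le (j : Fin n) :
    (∑ S : Finset (Fin n), ((1:ℝ)/3) ^ S.card
        * ((∑ x : Fin n → Bool, gee F j x * chi S x) / 2 ^ n) ^ 2) ^ 2
      ≤ (coordInf n j F) ^ 3 := by
  set g : (Fin n → Bool) → ℝ := gee F j with hg
  set q : Finset (Fin n) → ℝ := fun S => (∑ x : Fin n → Bool, g x * chi S x) / 2 ^ n with hq
  set Q : ℝ := ∑ S : Finset (Fin n), ((1:ℝ)/3) ^ S.card * q S ^ 2 with hQ
  set μ : ℝ := coordInf n j F with hμ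
  have h2n : (0:ℝ) < 2 ^ n := by positivity
  have hμ0 : 0 ≤ μ := coordInf_nonneg F j
  have hQ0 : 0 ≤ Q := Finset.sum_nonneg fun S _ => by positivity
  set k : (Fin n → Bool) → ℝ := fun x => ∑ S : Finset (Fin n), ((1:ℝ)/3) ^ S.card * q S * chi S x
    with hk
  -- ⟨g, k⟩ = 2^n Q
  have hgk : ∑ x : Fin n → Bool, g x * k x = 2 ^ n * Q := by
    calc ∑ x : Fin n → Bool, g x * k x
        = ∑ x : Fin n → Bool, ∑ S : Finset (Fin n),
            ((1:ℝ)/3) ^ S.card * q S * (g x * chi S x) := by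
          refine Finset.sum_congr rfl fun x _ => ?_
          rw [hk, Finset.mul_sum]
          exact Finset.sum_congr rfl fun S _ => by ring
      _ = ∑ S : Finset (Fin n), ∑ x : Fin n → Bool,
            ((1:ℝ)/3) ^ S.card * q S * (g x * chi S x) := Finset.sum_comm
      _ = ∑ S : Finset (Fin n), ((1:ℝ)/3) ^ S.card * q S * (2 ^ n * q S) := by
          refine Finset.sum_congr rfl fun S _ => ?_
          rw [← Finset.mul_sum]
          congr 1
          rw [hq]
          field_simp
      _ = 2 ^ n * Q := by
          rw [hQ, Finset.mul_sum]
          exact Finset.sum_congr rfl fun S _ => by ring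
  -- hypercontractivity for k
  have hk4 : ∑ x : Fin n → Bool, k x ^ 4 ≤ 2 ^ n * Q ^ 2 := by
    have hρ : (0:ℝ) ≤ Real.sqrt (1/3) := Real.sqrt_nonneg _
    have hρ3 : 3 * Real.sqrt (1/3) ^ 2 ≤ 1 := by
      rw [Real.sq_sqrt (by norm_num : (0:ℝ) ≤ 1/3)]; norm_num
    have h := hyp24 (Finset.univ : Finset (Fin n))
      (fun S => Real.sqrt (1/3) ^ S.card * q S) (Real.sqrt (1/3)) hρ hρ3
    rw [Finset.powerset_univ] at h
    have hss : Real.sqrt (1/3) * Real.sqrt (1/3) = 1/3 :=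
      Real.mul_self_sqrt (by norm_num)
    have hkeq : ∀ x : Fin n → Bool, k x = ∑ S : Finset (Fin n),
        Real.sqrt (1/3) ^ S.card * (Real.sqrt (1/3) ^ S.card * q S) * chi S x := by
      intro x
      refine Finset.sum_congr rfl fun S _ => ?_
      rw [show Real.sqrt (1/3) ^ S.card * (Real.sqrt (1/3) ^ S.card * q S)
          = (Real.sqrt (1/3) * Real.sqrt (1/3)) ^ S.card * q S by rw [mul_pow]; ring]
      rw [hss]
    have haa : ∑ S : Finset (Fin n), (Real.sqrt (1/3) ^ S.card * q S) ^ 2 = Q := by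
      rw [hQ]
      refine Finset.sum_congr rfl fun S _ => ?_
      rw [mul_pow, ← pow_mul, mul_comm S.card 2, pow_mul,
        Real.sq_sqrt (by norm_num : (0:ℝ) ≤ 1/3)]
    calc ∑ x : Fin n → Bool, k x ^ 4
        = ∑ x : Fin n → Bool, (∑ S : Finset (Fin n),
            Real.sqrt (1/3) ^ S.card * (Real.sqrt (1/3) ^ S.card * q S) * chi S x) ^ 4 :=
          Finset.sum_congr rfl fun x _ => by rw [hkeq x]
      _ ≤ 2 ^ (Fintype.card (Fin n)) * (∑ S : Finset (Fin n),
            (Real.sqrt (1/3) ^ S.card * q S) ^ 2) ^ 2 := h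
      _ = 2 ^ n * Q ^ 2 := by rw [haa, Fintype.card_fin]
  -- Cauchy–Schwarz chain
  set Sg : ℝ := ∑ x : Fin n → Bool, g x ^ 2 with hSg
  have hSgμ : Sg = 2 ^ n * μ := sum_gee_sq F j
  have hSg0 : 0 ≤ Sg := Finset.sum_nonneg fun x _ => sq_nonneg _
  set G1 : ℝ := ∑ x : Fin n → Bool, |g x| * |k x| with hG1
  have hG10 : 0 ≤ G1 := Finset.sum_nonneg fun x _ => by positivity
  have h1 : 2 ^ n * Q ≤ G1 := by
    rw [← hgk]
    exact Finset.sum_le_sum fun x _ => by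
      rw [← abs_mul]; exact le_abs_self _
  set G2 : ℝ := ∑ x : Fin n → Bool, g x ^ 2 * k x ^ 2 with hG2
  have hG20 : 0 ≤ G2 := Finset.sum_nonneg fun x _ => by positivity
  have h2 : G1 ^ 2 ≤ Sg * G2 := by
    have hcs := Finset.sum_mul_sq_le_sq_mul_sq Finset.univ
      (fun x : Fin n → Bool => |g x|) (fun x => |g x| * |k x|)
    have e1 : ∑ x : Fin n → Bool, |g x| * (|g x| * |k x|) = G1 := by
      refine Finset.sum_congr rfl fun x _ => ?_
      have : |g x| * |g x| = |g x| := by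
        rcases gee_vals F j x with h | h | h <;> rw [hg, h] <;> norm_num
      rw [← mul_assoc, this]
    have e2 : ∑ x : Fin n → Bool, |g x| ^ 2 = Sg := by
      exact Finset.sum_congr rfl fun x _ => sq_abs _
    have e3 : ∑ x : Fin n → Bool, (|g x| * |k x|) ^ 2 = G2 := by
      refine Finset.sum_congr rfl fun x _ => ?_
      rw [mul_pow, sq_abs, sq_abs]
    rw [e1, e2, e3] at hcs
    exact hcs
  have h3 : G2 ^ 2 ≤ Sg * (2 ^ n * Q ^ 2) := by
    have hcs := Finset.sum_mul_sq_le_sq_mul_sq Finset.univ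
      (fun x : Fin n → Bool => g x ^ 2) (fun x => k x ^ 2)
    have e1 : ∑ x : Fin n → Bool, (g x ^ 2) ^ 2 = Sg := by
      refine Finset.sum_congr rfl fun x _ => ?_
      rw [← pow_mul]
      exact gee_pow4 F j x
    rw [e1] at hcs
    have e2 : ∑ x : Fin n → Bool, (k x ^ 2) ^ 2 = ∑ x : Fin n → Bool, k x ^ 4 := by
      exact Finset.sum_congr rfl fun x _ => by ring
    rw [e2] at hcs
    calc G2 ^ 2 ≤ Sg * ∑ x : Fin n → Bool, k x ^ 4 := hcs
      _ ≤ Sg * (2 ^ n * Q ^ 2) := mul_le_mul_of_nonneg_left hk4 hSg0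
  -- combine
  have hQ4 : (2 ^ n * Q) ^ 4 ≤ Sg ^ 3 * (2 ^ n * Q ^ 2) := by
    have s1 : (2 ^ n * Q) ^ 2 ≤ G1 ^ 2 :=
      pow_le_pow_left₀ (by positivity) h1 2
    have s2 : (G1 ^ 2) ^ 2 ≤ (Sg * G2) ^ 2 :=
      pow_le_pow_left₀ (sq_nonneg _) h2 2
    have s3 : Sg ^ 2 * G2 ^ 2 ≤ Sg ^ 2 * (Sg * (2 ^ n * Q ^ 2)) :=
      mul_le_mul_of_nonneg_left h3 (sq_nonneg _)
    calc (2 ^ n * Q) ^ 4 = ((2 ^ n * Q) ^ 2) ^ 2 := by ring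
      _ ≤ (G1 ^ 2) ^ 2 := pow_le_pow_left₀ (sq_nonneg _) s1 2
      _ ≤ (Sg * G2) ^ 2 := s2
      _ = Sg ^ 2 * G2 ^ 2 := by ring
      _ ≤ Sg ^ 2 * (Sg * (2 ^ n * Q ^ 2)) := s3
      _ = Sg ^ 3 * (2 ^ n * Q ^ 2) := by ring
  rw [hSgμ] at hQ4
  have hc : ((2:ℝ) ^ n) ^ 4 * Q ^ 4 ≤ ((2:ℝ) ^ n) ^ 4 * (μ ^ 3 * Q ^ 2) := by
    calc ((2:ℝ) ^ n) ^ 4 * Q ^ 4 = (2 ^ n * Q) ^ 4 := by ring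
      _ ≤ (2 ^ n * μ) ^ 3 * (2 ^ n * Q ^ 2) := hQ4
      _ = ((2:ℝ) ^ n) ^ 4 * (μ ^ 3 * Q ^ 2) := by ring
  have hQ4' : Q ^ 4 ≤ μ ^ 3 * Q ^ 2 :=
    le_of_mul_le_mul_left hc (by positivity)
  rcases eq_or_lt_of_le hQ0 with h | h
  · rw [← h]
    norm_num
    exact pow_nonneg hμ0 3
  · have := le_of_mul_le_mul_right (by calc Q ^ 2 * Q ^ 2 = Q ^ 4 := by ring
      _ ≤ μ ^ 3 * Q ^ 2 := hQ4') (by positivity : (0:ℝ) < Q ^ 2)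
    exact this


/-- The hypercontractive quantity `Q_j = Σ_S 3^{-|S|} ĝ_j(S)²`. -/
noncomputable def Qj (j : Fin n) : ℝ :=
  ∑ S : Finset (Fin n), ((1:ℝ)/3) ^ S.card
    * ((∑ x : Fin n → Bool, gee F j x * chi S x) / 2 ^ n) ^ 2

lemma Qj_nonneg (j : Fin n) : 0 ≤ Qj F j :=
  Finset.sum_nonneg fun S _ => by positivity

lemma Qj_sq_le' (j : Fin n) : Qj F j ^ 2 ≤ coordInf n j F ^ 3 := Qj_sq_le F j

lemma q_erase (j : Fin n) {T : Finset (Fin n)} (hj : j ∈ T) :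
    (∑ x : Fin n → Bool, gee F j x * chi (T.erase j) x) / 2 ^ n = -2 * fhat n F T := by
  rw [G_eq F (Finset.notMem_erase j T), Finset.insert_erase hj, fhat_eq]
  ring

lemma Qj_lower (j : Fin n) (E : Finset (Finset (Fin n))) (hE : ∀ T ∈ E, j ∈ T) :
    ∑ T ∈ E, ((1:ℝ)/3) ^ (T.card - 1) * (4 * fhat n F T ^ 2) ≤ Qj F j := by
  have hinj : ∀ T ∈ E, ∀ T' ∈ E, T.erase j = T'.erase j → T = T' := by
    intro T hT T' hT' h
    rw [← Finset.insert_erase (hE T hT), ← Finset.insert_erase (hE T' hT'), h]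
  calc ∑ T ∈ E, ((1:ℝ)/3) ^ (T.card - 1) * (4 * fhat n F T ^ 2)
      = ∑ T ∈ E, ((1:ℝ)/3) ^ (T.erase j).card
          * ((∑ x : Fin n → Bool, gee F j x * chi (T.erase j) x) / 2 ^ n) ^ 2 := by
        refine Finset.sum_congr rfl fun T hT => ?_
        rw [q_erase F j (hE T hT), Finset.card_erase_of_mem (hE T hT)]
        ring
    _ = ∑ S ∈ E.image (fun T => T.erase j), ((1:ℝ)/3) ^ S.card
          * ((∑ x : Fin n → Bool, gee F j x * chi S x) / 2 ^ n) ^ 2 :=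
        (Finset.sum_image (f := fun S => ((1:ℝ)/3) ^ S.card
          * ((∑ x : Fin n → Bool, gee F j x * chi S x) / 2 ^ n) ^ 2) hinj).symm
    _ ≤ Qj F j := by
        refine Finset.sum_le_sum_of_subset_of_nonneg (Finset.subset_univ _)
          fun S _ _ => by positivity

lemma sum_swap_bound (A : Finset (Fin n)) (E : Finset (Finset (Fin n)))
    (w : Finset (Fin n) → ℝ) :
    ∑ T ∈ E, ((A.filter (fun j => j ∈ T)).card : ℝ) * w T
      = ∑ j ∈ A, ∑ T ∈ E.filter (fun T => j ∈ T), w T := by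
  have h1 : ∀ j ∈ A, ∑ T ∈ E.filter (fun T => j ∈ T), w T
      = ∑ T ∈ E, if j ∈ T then w T else 0 := fun j _ => (Finset.sum_filter _ _)
  rw [Finset.sum_congr rfl h1, Finset.sum_comm]
  refine Finset.sum_congr rfl fun T _ => ?_
  rw [Finset.sum_ite, Finset.sum_const, Finset.sum_const_zero, add_zero, nsmul_eq_mul]

end Main


lemma numeric_eventual : ∃ N : ℕ, ∀ n : ℕ, N ≤ n → 2 ≤ n ∧
    (Real.logb 2 n) ^ 2 * (n:ℝ) ^ (-(1/12:ℝ))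
      ≤ 16000000 * ((1:ℝ)/3) ^ (Real.logb 2 n / 25 : ℝ) := by
  have hlog2 : 0 < Real.log 2 := Real.log_pos (by norm_num)
  have hlog3 : 0 < Real.log 3 := Real.log_pos (by norm_num)
  have hkey : 12 * Real.log 3 < 25 * Real.log 2 := by
    have h := Real.log_lt_log (by norm_num : (0:ℝ) < 3 ^ 12)
      (by norm_num : (3:ℝ) ^ 12 < 2 ^ 25)
    rw [Real.log_pow, Real.log_pow] at h
    push_cast at h
    linarith
  set β : ℝ := Real.log 3 / (25 * Real.log 2) with hβ
  set δ : ℝ := 1/12 - β with hδdef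
  have hβpos : 0 < β := by positivity
  have hδ : 0 < δ := by
    have : β < 1/12 := by
      rw [hβ, div_lt_iff₀ (by positivity)]
      linarith
    simp only [hδdef]
    linarith
  have hlo := isLittleO_log_rpow_atTop (half_pos hδ)
  have hev1 := hlo.def (show (0:ℝ) < 1/2 by norm_num)
  have hend : ∀ᶠ x : ℝ in Filter.atTop, (Real.logb 2 x) ^ 2 * x ^ (-(1/12:ℝ))
      ≤ 16000000 * ((1:ℝ)/3) ^ (Real.logb 2 x / 25 : ℝ) := by
    filter_upwards [hev1, Filter.eventually_ge_atTop (1:ℝ)] with x hx1 hx2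
    have hx0 : (0:ℝ) < x := by linarith
    have hlogx : 0 ≤ Real.log x := Real.log_nonneg hx2
    -- identify the right-hand side power
    have hrhs : ((1:ℝ)/3) ^ (Real.logb 2 x / 25 : ℝ) = x ^ (-β) := by
      rw [Real.rpow_def_of_pos (by norm_num : (0:ℝ) < 1/3),
        Real.rpow_def_of_pos hx0]
      congr 1
      rw [one_div, Real.log_inv, Real.logb, hβ]
      field_simp
    have hsplit : x ^ (-(1/12:ℝ)) = x ^ (-β) * x ^ (-δ) := by
      rw [← Real.rpow_add hx0]
      congr 1
      simp only [hδdef]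
      ring
    have hlb : (Real.logb 2 x) ^ 2 ≤ 4 * (Real.log x) ^ 2 := by
      rw [Real.logb, div_pow]
      rw [div_le_iff₀ (by positivity)]
      have h2 : (1:ℝ)/2 < Real.log 2 := by
        have := Real.log_two_gt_d9
        linarith
      have h22 : (1:ℝ)/4 < Real.log 2 ^ 2 := by nlinarith
      nlinarith [mul_le_mul_of_nonneg_left (le_of_lt h22) (sq_nonneg (Real.log x))]
    have hlog_sq : 4 * (Real.log x) ^ 2 ≤ x ^ (δ:ℝ) := by
      rw [Real.norm_eq_abs, Real.norm_eq_abs, abs_of_nonneg hlogx,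
        abs_of_nonneg (Real.rpow_nonneg (le_of_lt hx0) _)] at hx1
      have hsq : (Real.log x) ^ 2 ≤ ((1/2) * x ^ (δ/2:ℝ)) ^ 2 :=
        pow_le_pow_left₀ hlogx hx1 2
      have hxx : (x ^ (δ/2:ℝ)) ^ 2 = x ^ (δ:ℝ) := by
        rw [sq, ← Real.rpow_add hx0]
        congr 1
        ring
      calc 4 * (Real.log x) ^ 2 ≤ 4 * ((1/2) * x ^ (δ/2:ℝ)) ^ 2 := by linarith
        _ = (x ^ (δ/2:ℝ)) ^ 2 := by ring
        _ = x ^ (δ:ℝ) := hxx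
    have hpos1 : (0:ℝ) ≤ x ^ (-β) := Real.rpow_nonneg (le_of_lt hx0) _
    have hstep : (Real.logb 2 x) ^ 2 * x ^ (-δ) ≤ 16000000 := by
      calc (Real.logb 2 x) ^ 2 * x ^ (-δ)
          ≤ x ^ (δ:ℝ) * x ^ (-δ) :=
            mul_le_mul_of_nonneg_right (hlb.trans hlog_sq)
              (Real.rpow_nonneg (le_of_lt hx0) _)
        _ = 1 := by rw [← Real.rpow_add hx0]; simp
        _ ≤ 16000000 := by norm_num
    calc (Real.logb 2 x) ^ 2 * x ^ (-(1/12:ℝ))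
        = ((Real.logb 2 x) ^ 2 * x ^ (-δ)) * x ^ (-β) := by rw [hsplit]; ring
      _ ≤ 16000000 * x ^ (-β) := mul_le_mul_of_nonneg_right hstep hpos1
      _ = 16000000 * ((1:ℝ)/3) ^ (Real.logb 2 x / 25 : ℝ) := by rw [hrhs]
  have hnat : ∀ᶠ m : ℕ in Filter.atTop, (Real.logb 2 m) ^ 2 * (m:ℝ) ^ (-(1/12:ℝ))
      ≤ 16000000 * ((1:ℝ)/3) ^ (Real.logb 2 m / 25 : ℝ) :=
    tendsto_natCast_atTop_atTop.eventually hend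
  have hboth := hnat.and (Filter.eventually_ge_atTop (2:ℕ))
  rw [Filter.eventually_atTop] at hboth
  obtain ⟨N, hN⟩ := hboth
  exact ⟨N, fun n hn => ⟨(hN n hn).2, (hN n hn).1⟩⟩


end CaseII

/-- Hypercontractive dichotomy (Case II): if `F` is a Boolean function of the
coordinates in `A` carrying Fourier mass at least `c₀` on levels
`0 < |T| < (log n)/50`, and the total influence over `A` is at most
`10^{-3} log n · ‖F‖₂²`, then for large `n` some coordinate `j ∈ A` has
`I_j(F) ≥ c · n^{-1/12}`, where `c > 0` depends only on `c₀`. -/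
theorem caseII_large_influence (c₀ : ℝ) (hc₀ : 0 < c₀) :
    ∃ c : ℝ, 0 < c ∧ ∃ N : ℕ, ∀ n ≥ N, ∀ (A : Finset (Fin n))
      (F : (Fin n → Bool) → Bool),
      (∀ x y : Fin n → Bool, (∀ i ∈ A, x i = y i) → F x = F y) →
      (c₀ ≤ ∑ T ∈ Finset.univ.filter (fun T : Finset (Fin n) =>
          0 < T.card ∧ (T.card : ℝ) < Real.logb 2 n / 50), (fhat n F T) ^ 2) →
      (∑ j ∈ A, coordInf n j F ≤ (10 : ℝ) ^ (-3 : ℤ) * Real.logb 2 n * Ef n F) →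
      ∃ j ∈ A, c * (n : ℝ) ^ (-(1 / 12 : ℝ)) ≤ coordInf n j F := by
  obtain ⟨N, hN⟩ := CaseII.numeric_eventual
  refine ⟨c₀ ^ 2, by positivity, N, ?_⟩
  intro n hn A F hF hmass hinf
  obtain ⟨hn2, hnum⟩ := hN n hn
  set L : ℝ := Real.logb 2 n with hL
  have hL1 : 1 ≤ L := by
    rw [hL, Real.logb, le_div_iff₀ (Real.log_pos one_lt_two)]
    have := Real.log_le_log (by norm_num : (0:ℝ) < 2)
      (show (2:ℝ) ≤ n by exact_mod_cast hn2)
    linarith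
  have hL0 : 0 < L := lt_of_lt_of_le one_pos hL1
  set lowF : Finset (Finset (Fin n)) := Finset.univ.filter
    (fun T : Finset (Fin n) => 0 < T.card ∧ (T.card : ℝ) < L / 50) with hlowF
  set R : ℝ := ((1:ℝ)/3) ^ (L/50 : ℝ) with hR
  have hR0 : 0 < R := Real.rpow_pos_of_pos (by norm_num) _
  set w : Finset (Fin n) → ℝ :=
    fun T => ((1:ℝ)/3) ^ (T.card - 1) * (4 * fhat n F T ^ 2) with hw
  have hlow : ∀ T ∈ lowF, 4 * R * fhat n F T ^ 2
      ≤ ((A.filter (fun j => j ∈ T)).card : ℝ) * w T := by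
    intro T hT
    rw [hlowF, Finset.mem_filter] at hT
    obtain ⟨-, hcard, hcardlt⟩ := hT
    by_cases hf : fhat n F T = 0
    · have h0 : 4 * R * fhat n F T ^ 2 = 0 := by rw [hf]; ring
      rw [h0, hw]
      positivity
    · have hTA : ∀ i ∈ T, i ∈ A := by
        by_contra hco
        push_neg at hco
        obtain ⟨i, hiT, hiA⟩ := hco
        refine hf ?_
        rw [CaseII.fhat_eq, CaseII.Fh_outside F hF hiT hiA]
        simp
      obtain ⟨i0, hi0⟩ := Finset.card_pos.mp hcard
      have hone : 1 ≤ ((A.filter (fun j => j ∈ T)).card : ℝ) := by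
        have hmem : i0 ∈ A.filter (fun j => j ∈ T) :=
          Finset.mem_filter.2 ⟨hTA i0 hi0, hi0⟩
        exact_mod_cast Nat.one_le_iff_ne_zero.2
          (Finset.card_ne_zero_of_mem hmem)
      have hpw : R ≤ ((1:ℝ)/3) ^ (T.card - 1) := by
        have hcast : ((T.card - 1 : ℕ) : ℝ) = (T.card : ℝ) - 1 := by
          rw [Nat.cast_sub hcard]
          norm_num
        calc R = ((1:ℝ)/3) ^ (L/50 : ℝ) := hR
          _ ≤ ((1:ℝ)/3) ^ (((T.card - 1 : ℕ) : ℝ)) :=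
            Real.rpow_le_rpow_of_exponent_ge (by norm_num) (by norm_num)
              (by rw [hcast]; linarith)
          _ = ((1:ℝ)/3) ^ (T.card - 1 : ℕ) := Real.rpow_natCast _ _
      calc 4 * R * fhat n F T ^ 2 = 1 * (R * (4 * fhat n F T ^ 2)) := by ring
        _ ≤ ((A.filter (fun j => j ∈ T)).card : ℝ)
              * (((1:ℝ)/3) ^ (T.card - 1) * (4 * fhat n F T ^ 2)) := by
            refine mul_le_mul hone
              (mul_le_mul_of_nonneg_right hpw (by positivity)) (by positivity)
              (le_trans zero_le_one hone)
        _ = ((A.filter (fun j => j ∈ T)).card : ℝ) * w T := by rw [hw]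
  have hlower : 4 * R * c₀ ≤ ∑ j ∈ A, CaseII.Qj F j := by
    calc 4 * R * c₀ ≤ 4 * R * ∑ T ∈ lowF, fhat n F T ^ 2 :=
        mul_le_mul_of_nonneg_left hmass (by positivity)
      _ = ∑ T ∈ lowF, 4 * R * fhat n F T ^ 2 := Finset.mul_sum _ _ _
      _ ≤ ∑ T ∈ lowF, ((A.filter (fun j => j ∈ T)).card : ℝ) * w T :=
        Finset.sum_le_sum hlow
      _ = ∑ j ∈ A, ∑ T ∈ lowF.filter (fun T => j ∈ T), w T :=
        CaseII.sum_swap_bound A lowF w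
      _ ≤ ∑ j ∈ A, CaseII.Qj F j :=
        Finset.sum_le_sum fun j _ => CaseII.Qj_lower F j _
          (fun T hT => (Finset.mem_filter.1 hT).2)
  have hA : A.Nonempty := by
    rcases Finset.eq_empty_or_nonempty A with h | h
    · exfalso
      rw [h, Finset.sum_empty] at hlower
      nlinarith
    · exact h
  obtain ⟨j₀, hj₀A, hj₀max⟩ := Finset.exists_max_image A (fun j => coordInf n j F) hA
  set m : ℝ := coordInf n j₀ F with hm
  have hm0 : 0 ≤ m := CaseII.coordInf_nonneg F j₀
  have hQm : ∀ j ∈ A, CaseII.Qj F j ≤ Real.sqrt m * coordInf n j F := by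
    intro j hj
    have h1 : CaseII.Qj F j ^ 2 ≤ coordInf n j F ^ 3 := CaseII.Qj_sq_le' F j
    have hμ0 : 0 ≤ coordInf n j F := CaseII.coordInf_nonneg F j
    have h2 : coordInf n j F ^ 3 ≤ m * coordInf n j F ^ 2 := by
      have hjm := hj₀max j hj
      calc coordInf n j F ^ 3 = coordInf n j F * coordInf n j F ^ 2 := by ring
        _ ≤ m * coordInf n j F ^ 2 :=
          mul_le_mul_of_nonneg_right hjm (sq_nonneg _)
    have h3 : (Real.sqrt m * coordInf n j F) ^ 2 = m * coordInf n j F ^ 2 := by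
      rw [mul_pow, Real.sq_sqrt hm0]
    calc CaseII.Qj F j = Real.sqrt (CaseII.Qj F j ^ 2) :=
        (Real.sqrt_sq (CaseII.Qj_nonneg F j)).symm
      _ ≤ Real.sqrt ((Real.sqrt m * coordInf n j F) ^ 2) :=
        Real.sqrt_le_sqrt (by rw [h3]; exact h1.trans h2)
      _ = Real.sqrt m * coordInf n j F := Real.sqrt_sq (by positivity)
  have hEf1 : Ef n F ≤ 1 := by
    unfold Ef
    rw [div_le_one (by positivity)]
    have hc := Finset.card_filter_le Finset.univ (fun x : Fin n → Bool => F x = true)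
    calc ((Finset.univ.filter (fun x : Fin n → Bool => F x = true)).card : ℝ)
        ≤ ((Finset.univ : Finset (Fin n → Bool)).card : ℝ) := by exact_mod_cast hc
      _ = 2 ^ n := by
          rw [Finset.card_univ, Fintype.card_fun, Fintype.card_bool, Fintype.card_fin]
          push_cast
          ring
  have hupper : ∑ j ∈ A, CaseII.Qj F j ≤ Real.sqrt m * ((1:ℝ)/1000 * L) := by
    calc ∑ j ∈ A, CaseII.Qj F j ≤ ∑ j ∈ A, Real.sqrt m * coordInf n j F :=
        Finset.sum_le_sum hQm
      _ = Real.sqrt m * ∑ j ∈ A, coordInf n j F := (Finset.mul_sum _ _ _).symm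
      _ ≤ Real.sqrt m * ((10:ℝ) ^ (-3:ℤ) * L * Ef n F) :=
        mul_le_mul_of_nonneg_left hinf (Real.sqrt_nonneg m)
      _ ≤ Real.sqrt m * ((1:ℝ)/1000 * L) := by
          refine mul_le_mul_of_nonneg_left ?_ (Real.sqrt_nonneg m)
          have h10 : ((10:ℝ) ^ (-3:ℤ)) = 1/1000 := by norm_num
          rw [h10]
          calc 1/1000 * L * Ef n F ≤ 1/1000 * L * 1 :=
              mul_le_mul_of_nonneg_left hEf1 (by positivity)
            _ = 1/1000 * L := mul_one _
  have hsqrt : 4000 * R * c₀ / L ≤ Real.sqrt m := by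
    rw [div_le_iff₀ hL0]
    have hh := hlower.trans hupper
    nlinarith [hh]
  have hmge : (4000 * R * c₀ / L) ^ 2 ≤ m := by
    have ha0 : 0 ≤ 4000 * R * c₀ / L := by positivity
    calc (4000 * R * c₀ / L) ^ 2 ≤ Real.sqrt m ^ 2 :=
        pow_le_pow_left₀ ha0 hsqrt 2
      _ = m := Real.sq_sqrt hm0
  refine ⟨j₀, hj₀A, ?_⟩
  have hfinal : c₀ ^ 2 * (n:ℝ) ^ (-(1/12:ℝ)) ≤ (4000 * R * c₀ / L) ^ 2 := by
    have hR2 : R ^ 2 = ((1:ℝ)/3) ^ (L/25 : ℝ) := by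
      rw [hR, ← Real.rpow_natCast (((1:ℝ)/3) ^ (L/50 : ℝ)) 2,
        ← Real.rpow_mul (by norm_num : (0:ℝ) ≤ 1/3)]
      norm_num
      ring_nf
    have h1 : (4000 * R * c₀ / L) ^ 2 = 16000000 * R ^ 2 * c₀ ^ 2 / L ^ 2 := by
      rw [div_pow]
      congr 1
      ring
    rw [h1, hR2, le_div_iff₀ (by positivity : (0:ℝ) < L ^ 2)]
    calc c₀ ^ 2 * (n:ℝ) ^ (-(1/12:ℝ)) * L ^ 2
        = c₀ ^ 2 * (L ^ 2 * (n:ℝ) ^ (-(1/12:ℝ))) := by ring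
      _ ≤ c₀ ^ 2 * (16000000 * ((1:ℝ)/3) ^ (L/25 : ℝ)) :=
        mul_le_mul_of_nonneg_left hnum (sq_nonneg c₀)
      _ = 16000000 * ((1:ℝ)/3) ^ (L/25 : ℝ) * c₀ ^ 2 := by ring
  exact hfinal.trans hmge
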